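/- arXiv:1011.3268 — 5 statements merged into one kernel-verified Lean document; each statement's English description precedes it below -/
import Mathlib

section
/- Let α₁ ≥ α₂ ≥ α₃ > 0 and v₁ ≥ v₂ ≥ v₃ ≥ 0 be reals, and suppose v₂ ≥ ((α₁-α₃)/α₁)·v₁ and v₃ ≥ ((α₂-α₃)/α₂)·v₁. Then (α₁v₁ + α₂v₂ + α₃v₃)/(α₃v₁ + α₁v₂ + α₂v₃) ≤ (α₁ + α₂(α₁-α₃)/α₁ + α₃(α₂-α₃)/α₂)/(α₃ + (α₁-α₃) + (α₂-α₃)), provided v₁ > 0 and the denominators are positive. -/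
theorem three_slot_case_i (α₁ α₂ α₃ v₁ v₂ v₃ : ℝ)
    (h12 : α₂ ≤ α₁) (h23 : α₃ ≤ α₂) (h3 : 0 < α₃)
    (hv12 : v₂ ≤ v₁) (hv23 : v₃ ≤ v₂) (hv3 : 0 ≤ v₃) (hv1 : 0 < v₁)
    (hb2 : ((α₁ - α₃) / α₁) * v₁ ≤ v₂)
    (hb3 : ((α₂ - α₃) / α₂) * v₁ ≤ v₃)
    (hden1 : 0 < α₃ * v₁ + α₁ * v₂ + α₂ * v₃)
    (hden2 : 0 < α₃ + (α₁ - α₃) + (α₂ - α₃)) :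
    (α₁ * v₁ + α₂ * v₂ + α₃ * v₃) / (α₃ * v₁ + α₁ * v₂ + α₂ * v₃) ≤
      (α₁ + α₂ * (α₁ - α₃) / α₁ + α₃ * (α₂ - α₃) / α₂) /
        (α₃ + (α₁ - α₃) + (α₂ - α₃)) := by
  have ha2 : 0 < α₂ := lt_of_lt_of_le h3 h23
  have ha1 : 0 < α₁ := lt_of_lt_of_le ha2 h12
  have hp2 : 0 ≤ α₁ * v₂ - (α₁ - α₃) * v₁ := by
    rw [div_mul_eq_mul_div, div_le_iff₀ ha1] at hb2
    nlinarith [hb2]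
  have hp3 : 0 ≤ α₂ * v₃ - (α₂ - α₃) * v₁ := by
    rw [div_mul_eq_mul_div, div_le_iff₀ ha2] at hb3
    nlinarith [hb3]
  have hA : 0 ≤ α₂ * (α₁ - α₂) * (α₁ + α₂) + α₁ * α₃ * (α₂ - α₃) := by
    have h1 := mul_nonneg (mul_nonneg ha2.le (sub_nonneg.mpr h12)) (by positivity : (0:ℝ) ≤ α₁ + α₂)
    have h2 := mul_nonneg (mul_nonneg ha1.le h3.le) (sub_nonneg.mpr h23)
    linarith
  have hB : 0 ≤ α₁ ^ 2 * (α₂ - α₃) + α₂ ^ 2 * (α₁ - α₃) := by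
    have h1 := mul_nonneg (sq_nonneg α₁) (sub_nonneg.mpr h23)
    have h2 := mul_nonneg (sq_nonneg α₂) (sub_nonneg.mpr (h23.trans h12))
    linarith
  rw [div_le_div_iff₀ hden1 hden2]
  have hR : α₁ + α₂ * (α₁ - α₃) / α₁ + α₃ * (α₂ - α₃) / α₂ =
      (α₁ ^ 2 * α₂ + α₂ ^ 2 * (α₁ - α₃) + α₁ * α₃ * (α₂ - α₃)) / (α₁ * α₂) := by
    field_simp
  rw [hR, div_mul_eq_mul_div, le_div_iff₀ (by positivity)]
  nlinarith [mul_nonneg hp2 hA, mul_nonneg hp3 hB]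
end

section
/- Let α₁ ≥ α₂ ≥ ... ≥ αₙ > 0 and v₁ ≥ ... ≥ vₙ ≥ 0 with v₁ > 0, and suppose vᵢ ≥ ((α_{i-1} - αₙ)/α_{i-1})·v₁ for all i ≥ 2. Then (α₁v₁ + Σ_{i>1} αᵢvᵢ)/(αₙv₁ + Σ_{i>1} α_{i-1}vᵢ) ≤ (α₁ + Σ_{i>1} αᵢ(α_{i-1}-αₙ)/α_{i-1})/(αₙ + Σ_{i>1} (α_{i-1}-αₙ)), assuming the denominators are positive. -/
/-!
Write `vᵢ = tᵢ v₁ + εᵢ` with `tᵢ = (α_{i-1} - αₙ)/α_{i-1}`; the Nash bounds say `εᵢ ≥ 0`.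
At `ε = 0` the ratio is exactly the right-hand side `C / D`, and `ε` adds `∑ αᵢ εᵢ` to the
numerator and `∑ α_{i-1} εᵢ` to the denominator. Since `αᵢ ≤ α_{i-1}` and, by telescoping
`∑ (α_{i-1} - αᵢ) = α₁ - αₙ` against `tᵢ ≤ 1`, also `D ≤ C`, every excess term has ratio at most
`C / D`, so it can only lower the ratio.
-/

open Finset

theorem sum_Icc_two_sub_telescope {M : Type*} [AddCommGroup M] (f : ℕ → M) {n : ℕ} (hn : 1 ≤ n) :
    ∑ i ∈ Icc 2 n, (f (i - 1) - f i) = f 1 - f n := by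
  induction n, hn using Nat.le_induction with
  | base => simp
  | succ k hk ih => rw [sum_Icc_succ_top (by omega), ih]; simp

theorem add_sum_Icc_mul_le_add_sum_Icc_mul {α t : ℕ → ℝ} {n : ℕ} (hn : 1 ≤ n)
    (hα : ∀ i ∈ Icc 2 n, α i ≤ α (i - 1)) (ht : ∀ i ∈ Icc 2 n, t i ≤ 1) :
    α n + ∑ i ∈ Icc 2 n, α (i - 1) * t i ≤ α 1 + ∑ i ∈ Icc 2 n, α i * t i := by
  have hgap : ∑ i ∈ Icc 2 n, (α (i - 1) - α i) * t i ≤ ∑ i ∈ Icc 2 n, (α (i - 1) - α i) :=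
    sum_le_sum fun i hi => mul_le_of_le_one_right (sub_nonneg.2 (hα i hi)) (ht i hi)
  rw [sum_Icc_two_sub_telescope α hn] at hgap
  simp only [sub_mul, sum_sub_distrib] at hgap
  linarith

theorem weighted_ratio_le_of_lower_bound {ι : Type*} (s : Finset ι) {p q u v : ι → ℝ} {a d x : ℝ}
    (hp : ∀ i ∈ s, 0 ≤ p i) (hpq : ∀ i ∈ s, p i ≤ q i) (hv : ∀ i ∈ s, u i * x ≤ v i)
    (hB : 0 < d * x + ∑ i ∈ s, q i * v i) (hD : 0 < d + ∑ i ∈ s, q i * u i)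
    (hDC : d + ∑ i ∈ s, q i * u i ≤ a + ∑ i ∈ s, p i * u i) :
    (a * x + ∑ i ∈ s, p i * v i) / (d * x + ∑ i ∈ s, q i * v i) ≤
      (a + ∑ i ∈ s, p i * u i) / (d + ∑ i ∈ s, q i * u i) := by
  set C := a + ∑ i ∈ s, p i * u i
  set D := d + ∑ i ∈ s, q i * u i
  have hsplit : ∀ w : ι → ℝ,
      ∑ i ∈ s, w i * v i = (∑ i ∈ s, w i * u i) * x + ∑ i ∈ s, w i * (v i - u i * x) := by
    intro w
    rw [sum_mul, ← sum_add_distrib]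
    exact sum_congr rfl fun i _ => by ring
  have hexcess : D * ∑ i ∈ s, p i * (v i - u i * x) ≤ C * ∑ i ∈ s, q i * (v i - u i * x) := by
    simp only [mul_sum, ← mul_assoc]
    refine sum_le_sum fun i hi => mul_le_mul_of_nonneg_right ?_ (sub_nonneg.2 (hv i hi))
    exact mul_le_mul hDC (hpq i hi) (hp i hi) (hD.trans_le hDC).le
  rw [div_le_div_iff₀ hB hD, hsplit p, hsplit q]
  linear_combination hexcess

theorem n_slot_reduction_general (n : ℕ) (hn : 2 ≤ n) (α v : ℕ → ℝ)
    (hαpos : ∀ i, 1 ≤ i → i ≤ n → 0 < α i)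
    (hαmono : ∀ i j, 1 ≤ i → i ≤ j → j ≤ n → α j ≤ α i)
    (hnash : ∀ i, 2 ≤ i → i ≤ n → ((α (i - 1) - α n) / α (i - 1)) * v 1 ≤ v i)
    (hden1 : 0 < α n * v 1 + ∑ i ∈ Finset.Icc 2 n, α (i - 1) * v i)
    (hden2 : 0 < α n + ∑ i ∈ Finset.Icc 2 n, (α (i - 1) - α n)) :
    (α 1 * v 1 + ∑ i ∈ Finset.Icc 2 n, α i * v i) /
        (α n * v 1 + ∑ i ∈ Finset.Icc 2 n, α (i - 1) * v i) ≤
      (α 1 + ∑ i ∈ Finset.Icc 2 n, α i * (α (i - 1) - α n) / α (i - 1)) /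
        (α n + ∑ i ∈ Finset.Icc 2 n, (α (i - 1) - α n)) := by
  set t : ℕ → ℝ := fun i => (α (i - 1) - α n) / α (i - 1)
  have hprev_pos : ∀ i ∈ Icc 2 n, 0 < α (i - 1) := fun i hi => by
    rw [mem_Icc] at hi; exact hαpos _ (by omega) (by omega)
  have hden : ∑ i ∈ Icc 2 n, (α (i - 1) - α n) = ∑ i ∈ Icc 2 n, α (i - 1) * t i :=
    sum_congr rfl fun i hi => (mul_div_cancel₀ _ (hprev_pos i hi).ne').symm
  have hnum : ∑ i ∈ Icc 2 n, α i * (α (i - 1) - α n) / α (i - 1) = ∑ i ∈ Icc 2 n, α i * t i :=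
    sum_congr rfl fun i _ => mul_div_assoc _ _ _
  have ht_le_one : ∀ i ∈ Icc 2 n, t i ≤ 1 := fun i hi =>
    div_le_one_of_le₀ (sub_le_self _ (hαpos n (by omega) le_rfl).le) (hprev_pos i hi).le
  have hα_step : ∀ i ∈ Icc 2 n, α i ≤ α (i - 1) := fun i hi => by
    rw [mem_Icc] at hi; exact hαmono (i - 1) i (by omega) (by omega) hi.2
  rw [hden] at hden2 ⊢
  rw [hnum]
  refine weighted_ratio_le_of_lower_bound _ (fun i hi => ?_) hα_step (fun i hi => ?_)
    hden1 hden2 (add_sum_Icc_mul_le_add_sum_Icc_mul (by omega) hα_step ht_le_one)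
  all_goals rw [mem_Icc] at hi
  · exact (hαpos i (by omega) hi.2).le
  · exact hnash i hi.1 hi.2

theorem n_slot_reduction (n : ℕ) (hn : 2 ≤ n) (α v : ℕ → ℝ)
    (hαpos : ∀ i, 1 ≤ i → i ≤ n → 0 < α i)
    (hαmono : ∀ i j, 1 ≤ i → i ≤ j → j ≤ n → α j ≤ α i)
    (hvmono : ∀ i j, 1 ≤ i → i ≤ j → j ≤ n → v j ≤ v i)
    (hvnonneg : ∀ i, 1 ≤ i → i ≤ n → 0 ≤ v i)
    (hv1 : 0 < v 1)
    (hnash : ∀ i, 2 ≤ i → i ≤ n → ((α (i - 1) - α n) / α (i - 1)) * v 1 ≤ v i)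
    (hden1 : 0 < α n * v 1 + ∑ i ∈ Finset.Icc 2 n, α (i - 1) * v i)
    (hden2 : 0 < α n + ∑ i ∈ Finset.Icc 2 n, (α (i - 1) - α n)) :
    (α 1 * v 1 + ∑ i ∈ Finset.Icc 2 n, α i * v i) /
        (α n * v 1 + ∑ i ∈ Finset.Icc 2 n, α (i - 1) * v i) ≤
      (α 1 + ∑ i ∈ Finset.Icc 2 n, α i * (α (i - 1) - α n) / α (i - 1)) /
        (α n + ∑ i ∈ Finset.Icc 2 n, (α (i - 1) - α n)) :=
  n_slot_reduction_general n hn α v hαpos hαmono hnash hden1 hden2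
end

section
/- Let α₁ ≥ α₂ ≥ α₃ ≥ 0 and v₁ ≥ v₂ ≥ v₃ ≥ 0 and let π be a permutation of {1,2,3} with π(i) = i for some i. If all the Nash no-deviation inequalities α_{σ(j)}·v_j ≥ α_k·(v_j - v_{π(k)}) hold for all players j and slots k with σ(j) > k (where σ = π⁻¹), then α₁v₁ + α₂v₂ + α₃v₃ ≤ 1.25·(α₁v_{π(1)} + α₂v_{π(2)} + α₃v_{π(3)}), assuming the right-hand side is positive. -/
/-- Two-slot GSP PoA core inequality. -/
lemma two_slot_core (a b x y : ℝ) (hb : 0 ≤ b) (hab : b ≤ a)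
    (hy : 0 ≤ y) (hxy : y ≤ x) (h : b * x ≥ a * (x - y)) :
    a * x + b * y ≤ 1.25 * (a * y + b * x) := by
  have ha : 0 ≤ a := hb.trans hab
  have hx : 0 ≤ x := hy.trans hxy
  have hDA : a * y ≤ a * x := mul_le_mul_of_nonneg_left hxy ha
  have hDB : b * x ≤ a * x := mul_le_mul_of_nonneg_right hab hx
  have hC : b * y ≤ b * x := mul_le_mul_of_nonneg_left hxy hb
  have hC0 : 0 ≤ b * y := mul_nonneg hb hy
  rcases eq_or_lt_of_le (mul_nonneg ha hx) with hD | hD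
  · nlinarith
  · have hSD : a * x ≤ a * y + b * x := by nlinarith
    have h4 : 0 ≤ 4 * (a * x) - (a * y + b * x) := by linarith
    have key : 0 ≤ (a * y + b * x - a * x) * (4 * (a * x) - (a * y + b * x)) :=
      mul_nonneg (by linarith) h4
    nlinarith [key, sq_nonneg (a * y - b * x), mul_pos hD hD]

lemma perm_fin3_fixed (π : Equiv.Perm (Fin 3)) (hfix : ∃ i, π i = i) :
    π = 1 ∨ π = Equiv.swap 0 1 ∨ π = Equiv.swap 0 2 ∨ π = Equiv.swap 1 2 := by
  revert hfix; revert π; decide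

theorem three_slot_fixed_point_poa (α v : Fin 3 → ℝ)
    (hα01 : α 1 ≤ α 0) (hα12 : α 2 ≤ α 1) (hα2 : 0 ≤ α 2)
    (hv01 : v 1 ≤ v 0) (hv12 : v 2 ≤ v 1) (hv2 : 0 ≤ v 2)
    (π : Equiv.Perm (Fin 3)) (hfix : ∃ i, π i = i)
    (hnash : ∀ j k : Fin 3, k < π.symm j →
      α (π.symm j) * v j ≥ α k * (v j - v (π k)))
    (hpos : 0 < ∑ k, α k * v (π k)) :
    ∑ i, α i * v i ≤ 1.25 * ∑ k, α k * v (π k) := by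
  have h01 : 0 ≤ α 1 := hα2.trans hα12
  have h00 : 0 ≤ α 0 := h01.trans hα01
  have hv1 : 0 ≤ v 1 := hv2.trans hv12
  have hv0 : 0 ≤ v 0 := hv1.trans hv01
  rcases perm_fin3_fixed π hfix with h | h | h | h <;> subst h <;>
    simp only [Fin.sum_univ_three, Equiv.Perm.one_apply, Equiv.symm_swap] at *
  · linarith
  · -- swap 0 1 : fixed 2
    have hn := hnash 0 0 (by decide)
    rw [show Equiv.swap (0:Fin 3) 1 0 = 1 by decide] at *
    rw [show Equiv.swap (0:Fin 3) 1 1 = 0 by decide] at *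
    rw [show Equiv.swap (0:Fin 3) 1 2 = 2 by decide] at *
    have := two_slot_core (α 0) (α 1) (v 0) (v 1) h01 hα01 hv1 hv01 hn
    nlinarith [mul_nonneg hα2 hv2]
  · -- swap 0 2 : fixed 1
    have hn := hnash 0 0 (by decide)
    rw [show Equiv.swap (0:Fin 3) 2 0 = 2 by decide] at *
    rw [show Equiv.swap (0:Fin 3) 2 2 = 0 by decide] at *
    rw [show Equiv.swap (0:Fin 3) 2 1 = 1 by decide] at *
    have := two_slot_core (α 0) (α 2) (v 0) (v 2) hα2 (hα12.trans hα01) hv2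
      (hv12.trans hv01) hn
    nlinarith [mul_nonneg h01 hv1]
  · -- swap 1 2 : fixed 0
    have hn := hnash 1 1 (by decide)
    rw [show Equiv.swap (1:Fin 3) 2 1 = 2 by decide] at *
    rw [show Equiv.swap (1:Fin 3) 2 2 = 1 by decide] at *
    rw [show Equiv.swap (1:Fin 3) 2 0 = 0 by decide] at *
    have := two_slot_core (α 1) (α 2) (v 1) (v 2) hα2 hα12 hv2 hv12 hn
    nlinarith [mul_nonneg h00 hv0]
end

section
/- Let γ ∈ (0,1], n ∈ ℕ, α : Fin n → ℝ≥0 nonincreasing, v : Fin n → ℝ≥0, and let σ : Fin n → Fin n be a permutation (the GSP assignment under bids b) and ν : Fin n → Fin n a permutation maximizing Σᵢ α(ν(i))·v(i). Suppose b : Fin n → ℝ≥0 satisfies b(i) ≤ v(i) for all i, and suppose for each player i: α(σ(i))·v(i) + α(ν(i))·b(π^i(ν(i))) ≥ γ·α(ν(i))·v(i), where π^i(k) denotes the player occupying slot k when i's bid is removed and the remaining bids are assigned greedily. Then 2·Σᵢ α(σ(i))·v(i) ≥ γ·Σᵢ α(ν(i))·v(i). -/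
theorem structural_implies_welfare (γ : ℝ) (hγ0 : 0 < γ) (hγ1 : γ ≤ 1)
    (n : ℕ) (α v b : Fin n → ℝ)
    (hα : Antitone α) (hα0 : ∀ k, 0 ≤ α k)
    (hv0 : ∀ i, 0 ≤ v i) (hb0 : ∀ i, 0 ≤ b i)
    (σ ν : Equiv.Perm (Fin n))
    -- σ is the GSP assignment: the player in slot k, namely σ⁻¹(k), has the k-th highest bid
    (hσsort : ∀ k l : Fin n, k ≤ l → b (σ.symm l) ≤ b (σ.symm k))
    -- ν maximizes the total welfare over permutations
    (hν : ∀ τ : Equiv.Perm (Fin n), ∑ i, α (τ i) * v i ≤ ∑ i, α (ν i) * v i)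
    -- bids never exceed values
    (hbv : ∀ i, b i ≤ v i)
    -- πi i k is the player occupying slot k when i's bid is removed and the
    -- remaining bids are assigned greedily; hence its bid is at most the bid
    -- of the player occupying slot k in the full assignment
    (πi : Fin n → Fin n → Fin n)
    (hπi : ∀ i k, b (πi i k) ≤ b (σ.symm k))
    -- the structural property (equation 1) with parameter γ
    (hstruct : ∀ i, α (σ i) * v i + α (ν i) * b (πi i (ν i)) ≥ γ * α (ν i) * v i) :
    2 * ∑ i, α (σ i) * v i ≥ γ * ∑ i, α (ν i) * v i := by
  have key : ∑ i, α (ν i) * b (πi i (ν i)) ≤ ∑ i, α (σ i) * v i := by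
    calc ∑ i, α (ν i) * b (πi i (ν i))
        ≤ ∑ i, α (ν i) * b (σ.symm (ν i)) := by
          apply Finset.sum_le_sum
          intro i _
          exact mul_le_mul_of_nonneg_left (hπi i (ν i)) (hα0 _)
      _ = ∑ k, α k * b (σ.symm k) := Equiv.sum_comp ν (fun k => α k * b (σ.symm k))
      _ = ∑ i, α (σ i) * b (σ.symm (σ i)) :=
          (Equiv.sum_comp σ (fun k => α k * b (σ.symm k))).symm
      _ = ∑ i, α (σ i) * b i := by simp
      _ ≤ ∑ i, α (σ i) * v i := by
          apply Finset.sum_le_sum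
          intro i _
          exact mul_le_mul_of_nonneg_left (hbv i) (hα0 _)
  have hsum : ∑ i, (α (σ i) * v i + α (ν i) * b (πi i (ν i)))
      ≥ ∑ i, γ * α (ν i) * v i := Finset.sum_le_sum (fun i _ => hstruct i)
  rw [Finset.sum_add_distrib] at hsum
  have : γ * ∑ i, α (ν i) * v i = ∑ i, γ * α (ν i) * v i := by
    rw [Finset.mul_sum]; congr 1; ext i; ring
  rw [this]
  linarith
end

section
/- Suppose for every i ∈ N (a subset of the n players) the structural inequality α(σ(i))·v(i) + α(ν(i))·b(π^i(ν(i))) ≥ γ·α(ν(i))·v(i) holds, where b(j) ≤ v(j) for ALL players j (including those outside N), σ is the GSP assignment under b, π = σ⁻¹, π^i is the GSP assignment with i removed, and ν maximizes Σ_{i∈N} α(ν(i))·v(i) over permutations. Then 2·Σ_{j=1}^n α(σ(j))·v(j) ≥ γ·Σ_{i∈N} α(ν(i))·v(i). -/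
/-! Summing the structural inequality over `N` leaves two terms. The first, `∑_{i∈N} α(σ i) v i`,
is part of the GSP welfare. In the second, each `b(π^i(ν i))` is at most `b(π(ν i)) ≤ v(π(ν i))`
(removing a bidder can only lower the bid in a slot), and since `ν` is injective the slots
`ν i` are distinct, so it is dominated by `∑ₖ α k v(π k)`, which is again the GSP welfare. -/

open Finset

theorem sum_mul_bid_removed_le_welfare {ι : Type*} [Fintype ι] (N : Finset ι) (α v b : ι → ℝ)
    (hα0 : ∀ k, 0 ≤ α k) (hv0 : ∀ i, 0 ≤ v i) (hbv : ∀ j, b j ≤ v j)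
    (σ ν : Equiv.Perm ι) (πi : ι → ι → ι) (hπi : ∀ i k, b (πi i k) ≤ b (σ.symm k)) :
    ∑ i ∈ N, α (ν i) * b (πi i (ν i)) ≤ ∑ j, α (σ j) * v j :=
  calc ∑ i ∈ N, α (ν i) * b (πi i (ν i))
      ≤ ∑ i ∈ N, α (ν i) * v (σ.symm (ν i)) :=
        sum_le_sum fun i _ => mul_le_mul_of_nonneg_left ((hπi i (ν i)).trans (hbv _)) (hα0 _)
    _ ≤ ∑ i, α (ν i) * v (σ.symm (ν i)) :=
        sum_le_univ_sum_of_nonneg fun i => mul_nonneg (hα0 _) (hv0 _)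
    _ = ∑ k, α k * v (σ.symm k) := Equiv.sum_comp ν fun k => α k * v (σ.symm k)
    _ = ∑ j, α (σ j) * v j := by simpa using Equiv.sum_comp σ.symm fun j => α (σ j) * v j

theorem structural_implies_welfare_byzantine_general (γ : ℝ)
    (n : ℕ) (N : Finset (Fin n)) (α v b : Fin n → ℝ)
    (hα0 : ∀ k, 0 ≤ α k)
    (hv0 : ∀ i, 0 ≤ v i)
    (σ ν : Equiv.Perm (Fin n))
    -- no player (rational or byzantine) ever bids above value
    (hbv : ∀ j, b j ≤ v j)
    -- πi i k : player occupying slot k when i's bid is removed (greedy assignment)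
    (πi : Fin n → Fin n → Fin n)
    (hπi : ∀ i k, b (πi i k) ≤ b (σ.symm k))
    -- structural property holds for rational players
    (hstruct : ∀ i ∈ N, α (σ i) * v i + α (ν i) * b (πi i (ν i)) ≥ γ * α (ν i) * v i) :
    2 * ∑ j, α (σ j) * v j ≥ γ * ∑ i ∈ N, α (ν i) * v i := by
  have hsum : γ * ∑ i ∈ N, α (ν i) * v i ≤
      ∑ i ∈ N, α (σ i) * v i + ∑ i ∈ N, α (ν i) * b (πi i (ν i)) := by
    rw [mul_sum, ← sum_add_distrib]
    exact sum_le_sum fun i hi => by linarith [hstruct i hi]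
  have hrational : ∑ i ∈ N, α (σ i) * v i ≤ ∑ j, α (σ j) * v j :=
    sum_le_univ_sum_of_nonneg fun i => mul_nonneg (hα0 _) (hv0 _)
  linarith [sum_mul_bid_removed_le_welfare N α v b hα0 hv0 hbv σ ν πi hπi]

theorem structural_implies_welfare_byzantine (γ : ℝ) (hγ0 : 0 < γ) (hγ1 : γ ≤ 1)
    (n : ℕ) (N : Finset (Fin n)) (α v b : Fin n → ℝ)
    (hα : Antitone α) (hα0 : ∀ k, 0 ≤ α k)
    (hv0 : ∀ i, 0 ≤ v i) (hb0 : ∀ i, 0 ≤ b i)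
    (σ ν : Equiv.Perm (Fin n))
    -- σ is the GSP assignment: the player in slot k, namely σ⁻¹(k), has the k-th highest bid
    (hσsort : ∀ k l : Fin n, k ≤ l → b (σ.symm l) ≤ b (σ.symm k))
    -- ν maximizes the welfare of the rational players N over permutations
    (hν : ∀ τ : Equiv.Perm (Fin n),
      ∑ i ∈ N, α (τ i) * v i ≤ ∑ i ∈ N, α (ν i) * v i)
    -- no player (rational or byzantine) ever bids above value
    (hbv : ∀ j, b j ≤ v j)
    -- πi i k : player occupying slot k when i's bid is removed (greedy assignment)
    (πi : Fin n → Fin n → Fin n)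
    (hπi : ∀ i k, b (πi i k) ≤ b (σ.symm k))
    -- structural property holds for rational players
    (hstruct : ∀ i ∈ N, α (σ i) * v i + α (ν i) * b (πi i (ν i)) ≥ γ * α (ν i) * v i) :
    2 * ∑ j, α (σ j) * v j ≥ γ * ∑ i ∈ N, α (ν i) * v i :=
  structural_implies_welfare_byzantine_general γ n N α v b hα0 hv0 σ ν hbv πi hπi hstruct
end
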